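/- arXiv:1012.5439 — 4 statements merged into one kernel-verified Lean document; each statement's English description precedes it below -/
import Mathlib

section
/- A data ω-word w over a finite alphabet Σ satisfies the key-constraint V(a)↦a (i.e., any two distinct a-labeled positions of w carry different data values) if and only if all three of the following hold: (K1) for each R ⊆ Σ with a ∈ R, no two distinct R-zones of w carry the same data value; (K2) for all R, R' ⊆ Σ with a ∈ R, a ∈ R' and R ≠ R', Z_w(R) ∩ Z_w(R') = ∅; (K3) the label a occurs at most once in every zone of w. -/
/-!
Zonal characterization of key-constraints (Proposition `p: zonal disj const`).
-/

variable {A : Type*} [Fintype A] [DecidableEq A]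

/-- `V_w(a)`: the set of data values occurring at `a`-labeled positions of the
data ω-word `w`. -/
def Vset (w : ℕ → A × ℕ) (a : A) : Set ℕ := {d | ∃ i, w i = (a, d)}

/-- Position `s` starts a zone of `w`: it is the first position, or its data
value differs from the one of the previous position. -/
def IsZoneStart (w : ℕ → A × ℕ) (s : ℕ) : Prop :=
  s = 0 ∨ (w (s - 1)).2 ≠ (w s).2

/-- The zone starting at position `s`: all positions `j ≥ s` such that every
position between `s` and `j` carries the data value of position `s`.  When `s`
is a zone start this is the maximal interval of consecutive positions around
`s` with constant data value (possibly infinite). -/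
def zoneOf (w : ℕ → A × ℕ) (s : ℕ) : Set ℕ :=
  {j | s ≤ j ∧ ∀ k, s ≤ k → k ≤ j → (w k).2 = (w s).2}

/-- The set of labels occurring in the zone starting at `s`. -/
def zoneLabels (w : ℕ → A × ℕ) (s : ℕ) : Set A :=
  (fun j => (w j).1) '' zoneOf w s

/-- `Z_w(R)`: the set of data values carried by the `R`-zones of `w`, i.e. the
zones whose set of labels is exactly `R`. -/
def Zset (w : ℕ → A × ℕ) (R : Finset A) : Set ℕ :=
  {d | ∃ s, IsZoneStart w s ∧ zoneLabels w s = ↑R ∧ (w s).2 = d}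

lemma zoneOf_snd {w : ℕ → A × ℕ} {s j : ℕ} (h : j ∈ zoneOf w s) : (w j).2 = (w s).2 :=
  h.2 j h.1 le_rfl

lemma zone_start_eq {w : ℕ → A × ℕ} {s t i : ℕ}
    (hs : IsZoneStart w s) (ht : IsZoneStart w t)
    (his : i ∈ zoneOf w s) (hit : i ∈ zoneOf w t) : s = t := by
  rcases lt_trichotomy s t with h | h | h
  · exfalso
    rcases ht with rfl | hne
    · omega
    · refine hne ?_
      have h1 := his.2 (t - 1) (by omega) (by have := hit.1; omega)
      have h2 := his.2 t (by omega) hit.1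
      rw [h1, h2]
  · exact h
  · exfalso
    rcases hs with rfl | hne
    · omega
    · refine hne ?_
      have h1 := hit.2 (s - 1) (by omega) (by have := his.1; omega)
      have h2 := hit.2 s (by omega) his.1
      rw [h1, h2]

lemma exists_zone_start (w : ℕ → A × ℕ) (i : ℕ) :
    ∃ s, IsZoneStart w s ∧ i ∈ zoneOf w s := by
  classical
  have hP : ∃ m, ∀ k, m ≤ k → k ≤ i → (w k).2 = (w i).2 :=
    ⟨i, fun k h1 h2 => by rw [le_antisymm h2 h1]⟩
  set s := Nat.find hP with hsdef
  have hs := Nat.find_spec hP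
  have hsi : s ≤ i := Nat.find_min' hP (fun k h1 h2 => by rw [le_antisymm h2 h1])
  have hmem : i ∈ zoneOf w s :=
    ⟨hsi, fun k h1 h2 => by rw [hs k h1 h2, hs s le_rfl hsi]⟩
  refine ⟨s, ?_, hmem⟩
  by_cases h0 : s = 0
  · exact Or.inl h0
  · right
    have hmin := Nat.find_min hP (m := s - 1) (by omega)
    push_neg at hmin
    obtain ⟨k, hk1, hk2, hk3⟩ := hmin
    have hks : k = s - 1 := by
      by_contra hne
      exact hk3 (hs k (by omega) hk2)
    rw [hs s le_rfl hsi]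
    rw [hks] at hk3
    exact hk3

lemma key_zone_start_eq {w : ℕ → A × ℕ} {a : A} {s t : ℕ}
    (hkey : ∀ i j, i ≠ j → (w i).1 = a → (w j).1 = a → (w i).2 ≠ (w j).2)
    (hs : IsZoneStart w s) (ht : IsZoneStart w t)
    (has : a ∈ zoneLabels w s) (hat : a ∈ zoneLabels w t)
    (hd : (w s).2 = (w t).2) : s = t := by
  obtain ⟨i, his, hia⟩ := has
  obtain ⟨j, hjt, hja⟩ := hat
  have hij : i = j := by
    by_contra hne
    exact hkey i j hne hia hja (by rw [zoneOf_snd his, zoneOf_snd hjt, hd])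
  subst hij
  exact zone_start_eq hs ht his hjt

/-- A data ω-word `w` satisfies the key-constraint `V(a) ↦ a` iff:
(K1) for each `R ⊆ Σ` with `a ∈ R`, no two distinct `R`-zones of `w` carry the
same data value; (K2) for all distinct `R, R' ⊆ Σ` both containing `a`,
`Z_w(R) ∩ Z_w(R') = ∅`; and (K3) the label `a` occurs at most once in every
zone of `w`. -/
theorem key_constraint_iff_zonal
    (w : ℕ → A × ℕ) (a : A) :
    (∀ i j, i ≠ j → (w i).1 = a → (w j).1 = a → (w i).2 ≠ (w j).2) ↔
      ((∀ R : Finset A, a ∈ R →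
          ∀ s t, IsZoneStart w s → IsZoneStart w t →
            zoneLabels w s = ↑R → zoneLabels w t = ↑R → s ≠ t →
              (w s).2 ≠ (w t).2) ∧
       (∀ R R' : Finset A, a ∈ R → a ∈ R' → R ≠ R' →
          Zset w R ∩ Zset w R' = ∅) ∧
       (∀ s, IsZoneStart w s → ∀ i j, i ∈ zoneOf w s → j ∈ zoneOf w s →
          (w i).1 = a → (w j).1 = a → i = j)) := by
  classical
  constructor
  · intro hkey
    refine ⟨?_, ?_, ?_⟩
    · intro R haR s t hs ht hls hlt hst heq
      have has : a ∈ zoneLabels w s := by rw [hls]; exact_mod_cast haR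
      have hat : a ∈ zoneLabels w t := by rw [hlt]; exact_mod_cast haR
      exact hst (key_zone_start_eq hkey hs ht has hat heq)
    · intro R R' haR haR' hRR
      rw [Set.eq_empty_iff_forall_notMem]
      rintro d ⟨⟨s, hs, hls, hds⟩, ⟨t, ht, hlt, hdt⟩⟩
      have has : a ∈ zoneLabels w s := by rw [hls]; exact_mod_cast haR
      have hat : a ∈ zoneLabels w t := by rw [hlt]; exact_mod_cast haR'
      have hst : s = t := key_zone_start_eq hkey hs ht has hat (by rw [hds, hdt])
      subst hst
      exact hRR (Finset.coe_injective (hls ▸ hlt))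
    · intro s hs i j hi hj hia hja
      by_contra hne
      exact hkey i j hne hia hja (by rw [zoneOf_snd hi, zoneOf_snd hj])
  · rintro ⟨K1, K2, K3⟩ i j hij hia hja heq
    obtain ⟨s, hs, his⟩ := exists_zone_start w i
    obtain ⟨t, ht, hjt⟩ := exists_zone_start w j
    by_cases hst : s = t
    · subst hst
      exact hij (K3 s hs i j his hjt hia hja)
    · set R : Finset A := (Set.toFinite (zoneLabels w s)).toFinset with hR
      set R' : Finset A := (Set.toFinite (zoneLabels w t)).toFinset with hR'
      have hcR : (↑R : Set A) = zoneLabels w s := Set.Finite.coe_toFinset _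
      have hcR' : (↑R' : Set A) = zoneLabels w t := Set.Finite.coe_toFinset _
      have haR : a ∈ R := by
        rw [← Finset.mem_coe, hcR]; exact ⟨i, his, hia⟩
      have haR' : a ∈ R' := by
        rw [← Finset.mem_coe, hcR']; exact ⟨j, hjt, hja⟩
      have hdst : (w s).2 = (w t).2 := by
        rw [← zoneOf_snd his, ← zoneOf_snd hjt, heq]
      by_cases hRR : R = R'
      · exact K1 R haR s t hs ht hcR.symm (by rw [hRR]; exact hcR'.symm) hst hdst
      · have hdR : (w s).2 ∈ Zset w R := ⟨s, hs, hcR.symm, rfl⟩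
        have hdR' : (w s).2 ∈ Zset w R' := ⟨t, ht, hcR'.symm, hdst.symm⟩
        have := K2 R R' haR haR' hRR
        rw [Set.eq_empty_iff_forall_notMem] at this
        exact this _ ⟨hdR, hdR'⟩
end

section
/- A data ω-word w over a finite alphabet Σ satisfies the inclusion-constraint V(a) ⊆ ⋃_{b∈S} V(b) (i.e., V_w(a) ⊆ ⋃_{b∈S} V_w(b)) if and only if for every R ⊆ Σ with a ∈ R, Z_w(R) ⊆ ⋃_{S' ⊆ Σ : S' ∩ S ≠ ∅} Z_w(S'). -/
/-!
Zonal characterization of inclusion-constraints (Proposition `p: zonal disj const`).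
-/

variable {A : Type*} [Fintype A] [DecidableEq A]

/-- A data ω-word `w` satisfies the inclusion-constraint
`V(a) ⊆ ⋃_{b ∈ S} V(b)` iff for every `R ⊆ Σ` with `a ∈ R`,
`Z_w(R) ⊆ ⋃_{S' ∩ S ≠ ∅} Z_w(S')`. -/
theorem inclusion_constraint_iff_zonal
    (w : ℕ → A × ℕ) (a : A) (S : Finset A) :
    (Vset w a ⊆ ⋃ b ∈ S, Vset w b) ↔
      ∀ R : Finset A, a ∈ R →
        Zset w R ⊆ ⋃ (S' : Finset A) (_ : (S' ∩ S).Nonempty), Zset w S' := by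
  classical
  constructor
  · intro hV R haR d hd
    obtain ⟨s, hstart, hlab, hval⟩ := hd
    have ha : a ∈ zoneLabels w s := by rw [hlab]; exact_mod_cast haR
    obtain ⟨j, hj, hja'⟩ := ha
    have hja : (w j).1 = a := hja'
    have hjv : (w j).2 = (w s).2 := hj.2 j hj.1 le_rfl
    have hdVa : d ∈ Vset w a :=
      ⟨j, by rw [show w j = ((w j).1, (w j).2) from rfl, hja, hjv, hval]⟩
    have hmem := hV hdVa
    simp only [Set.mem_iUnion] at hmem
    obtain ⟨b, hbS, i, hwi⟩ := hmem
    obtain ⟨s', hstart', hmem'⟩ := exists_zone_start w i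
    have h2 : (w i).2 = (w s').2 := hmem'.2 i hmem'.1 le_rfl
    rw [hwi] at h2
    refine Set.mem_iUnion.2 ⟨(Set.toFinite (zoneLabels w s')).toFinset,
      Set.mem_iUnion.2 ⟨⟨b, Finset.mem_inter.2 ⟨?_, hbS⟩⟩,
        s', hstart', ((Set.toFinite (zoneLabels w s')).coe_toFinset).symm, h2.symm⟩⟩
    rw [Set.Finite.mem_toFinset]
    exact ⟨i, hmem', show (w i).1 = b by rw [hwi]⟩
  · intro hZ d hd
    obtain ⟨i, hwi⟩ := hd
    obtain ⟨s, hstart, hmem⟩ := exists_zone_start w i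
    have h2 : (w i).2 = (w s).2 := hmem.2 i hmem.1 le_rfl
    rw [hwi] at h2
    have hdZ : d ∈ Zset w (Set.toFinite (zoneLabels w s)).toFinset :=
      ⟨s, hstart, ((Set.toFinite (zoneLabels w s)).coe_toFinset).symm, h2.symm⟩
    have haR : a ∈ (Set.toFinite (zoneLabels w s)).toFinset := by
      rw [Set.Finite.mem_toFinset]
      exact ⟨i, hmem, show (w i).1 = a by rw [hwi]⟩
    have h := hZ _ haR hdZ
    simp only [Set.mem_iUnion] at h
    obtain ⟨S', hne, s', hstart', hlab', hval'⟩ := h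
    obtain ⟨b, hb⟩ := hne
    have hbS' := (Finset.mem_inter.1 hb).1
    have hbS := (Finset.mem_inter.1 hb).2
    have hbz : b ∈ zoneLabels w s' := by rw [hlab']; exact_mod_cast hbS'
    obtain ⟨j, hj, hjb'⟩ := hbz
    have hjb : (w j).1 = b := hjb'
    have hjv : (w j).2 = (w s').2 := hj.2 j hj.1 le_rfl
    exact Set.mem_iUnion.2 ⟨b, Set.mem_iUnion.2 ⟨hbS, j,
      by rw [show w j = ((w j).1, (w j).2) from rfl, hjb, hjv, hval']⟩⟩
end

section
/- Let C be a finite collection of inclusion- and denial-constraints (no key-constraints) over a finite alphabet Σ, and define S0(C) ⊆ 2^Σ by: S ∈ S0(C) iff either some inclusion-constraint V(a) ⊆ ⋃_{b∈R} V(b) in C satisfies a ∈ S and S ∩ R = ∅, or some denial-constraint V(a) ∩ V(b) = ∅ in C satisfies a ∈ S and b ∈ S. If a data ω-word w satisfies C, then there exist a function f : Σ → 2^Σ such that for each a ∈ Σ either (a ∈ f(a) and f(a) ∉ S0(C)) or f(a) = ∅, and a data ω-word v such that v satisfies C, Proj(v) = Proj(w), and [S]_v = ∅ for every nonempty S ⊆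 Σ not in the image of f. -/
/-!
Claim used in the NP algorithm (Claim `cl: many empty-sets`): without
key-constraints, a satisfying data ω-word can be modified so that only the
class sets `[S]_v` for `S` in the image of a small function `f` are nonempty.
-/

variable {A : Type*} [Fintype A] [DecidableEq A]

/-- Inclusion- and denial-constraints over the alphabet `A`. -/
inductive Constraint (A : Type*) : Type _
  | incl : A → Finset A → Constraint A    -- `V(a) ⊆ ⋃_{b ∈ R} V(b)`
  | denial : A → A → Constraint A         -- `V(a) ∩ V(b) = ∅`

/-- `[S]_w = ⋂_{a ∈ S} V_w(a) ∩ ⋂_{b ∉ S} (D ∖ V_w(b))`. -/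
def classSet (w : ℕ → A × ℕ) (S : Finset A) : Set ℕ :=
  (⋂ a ∈ S, Vset w a) ∩ (⋂ b ∈ Sᶜ, (Vset w b)ᶜ)

/-- Satisfaction of a constraint by a data ω-word. -/
def SatConstraint (w : ℕ → A × ℕ) : Constraint A → Prop
  | .incl a R => Vset w a ⊆ ⋃ b ∈ R, Vset w b
  | .denial a b => Vset w a ∩ Vset w b = ∅

/-- `S ∈ S₀(C)`: some inclusion-constraint `V(a) ⊆ ⋃_{b ∈ R} V(b)` of `C` has
`a ∈ S` and `S ∩ R = ∅`, or some denial-constraint `V(a) ∩ V(b) = ∅` of `C`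
has `a ∈ S` and `b ∈ S`. -/
def memS0 (C : List (Constraint A)) (S : Finset A) : Prop :=
  (∃ a R, Constraint.incl a R ∈ C ∧ a ∈ S ∧ S ∩ R = ∅) ∨
  (∃ a b, Constraint.denial a b ∈ C ∧ a ∈ S ∧ b ∈ S)

/-- If a data ω-word `w` satisfies a finite collection `C` of inclusion- and
denial-constraints, then there are a function `f : Σ → 2^Σ` with, for each
`a`, either (`a ∈ f(a)` and `f(a) ∉ S₀(C)`) or `f(a) = ∅`, and a data ω-word
`v` satisfying `C` with `Proj(v) = Proj(w)` and `[S]_v = ∅` for every nonempty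
`S` outside the image of `f`. -/
theorem many_empty_sets (C : List (Constraint A)) (w : ℕ → A × ℕ)
    (hw : ∀ c ∈ C, SatConstraint w c) :
    ∃ f : A → Finset A,
      (∀ a : A, (a ∈ f a ∧ ¬ memS0 C (f a)) ∨ f a = ∅) ∧
      ∃ v : ℕ → A × ℕ,
        (∀ c ∈ C, SatConstraint v c) ∧
        (∀ i, (v i).1 = (w i).1) ∧
        ∀ S : Finset A, S.Nonempty → (∀ a : A, f a ≠ S) → classSet v S = ∅ := by
  classical
  -- witness value for each occurring letter
  set δ : A → ℕ := fun a => if h : (Vset w a).Nonempty then h.choose else 0 with hδdef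
  have hδmem : ∀ a, (Vset w a).Nonempty → δ a ∈ Vset w a := by
    intro a h
    simp only [hδdef, dif_pos h]
    exact h.choose_spec
  set P : ℕ → Prop := fun d => ∃ a, (Vset w a).Nonempty ∧ δ a = d with hPdef
  set σ : ℕ → A := fun d => if h : P d then h.choose else (w 0).1 with hσdef
  have hσ : ∀ d, P d → (Vset w (σ d)).Nonempty ∧ δ (σ d) = d := by
    intro d h
    simp only [hσdef, dif_pos h]
    exact h.choose_spec
  set e : A ≃ Fin (Fintype.card A) := Fintype.equivFin A with hedef
  have hecode : Function.Injective (fun a : A => ((e a : ℕ))) := by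
    intro a b h
    exact e.injective (Fin.val_injective h)
  -- the modified word
  set v : ℕ → A × ℕ :=
    fun i => ((w i).1, (e (σ (if P (w i).2 then (w i).2 else δ (w i).1)) : ℕ)) with hvdef
  have hwmem : ∀ i, (w i).2 ∈ Vset w (w i).1 := fun i => ⟨i, rfl⟩
  -- characterization of the value sets of v
  have hV : ∀ (b : A) (x : ℕ), x ∈ Vset v b ↔
      ∃ c, x = (e c : ℕ) ∧ (Vset w c).Nonempty ∧ σ (δ c) = c ∧ δ c ∈ Vset w b := by
    intro b x
    constructor
    · rintro ⟨i, hi⟩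
      have h1 : (w i).1 = b := congrArg Prod.fst hi
      have h2 : (e (σ (if P (w i).2 then (w i).2 else δ (w i).1)) : ℕ) = x :=
        congrArg Prod.snd hi
      by_cases hP : P (w i).2
      · refine ⟨σ (w i).2, ?_, (hσ _ hP).1, ?_, ?_⟩
        · rw [← h2, if_pos hP]
        · rw [(hσ _ hP).2]
        · rw [(hσ _ hP).2, ← h1]; exact hwmem i
      · have hOb : (Vset w (w i).1).Nonempty := ⟨(w i).2, hwmem i⟩
        have hPb : P (δ (w i).1) := ⟨(w i).1, hOb, rfl⟩
        refine ⟨σ (δ (w i).1), ?_, (hσ _ hPb).1, ?_, ?_⟩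
        · rw [← h2, if_neg hP]
        · rw [(hσ _ hPb).2]
        · rw [(hσ _ hPb).2, ← h1]; exact hδmem _ hOb
    · rintro ⟨c, hx, hOc, hfix, hmem⟩
      obtain ⟨i, hi⟩ := hmem
      refine ⟨i, ?_⟩
      have h1 : (w i).1 = b := congrArg Prod.fst hi
      have h2 : (w i).2 = δ c := congrArg Prod.snd hi
      have hP : P (δ c) := ⟨c, hOc, rfl⟩
      simp only [hvdef, h1, h2, if_pos hP, hfix, hx]
  -- the function f
  set f : A → Finset A := fun a =>
    if (Vset w a).Nonempty then Finset.univ.filter (fun b => δ a ∈ Vset w b) else ∅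
    with hfdef
  have hfmem : ∀ a, (Vset w a).Nonempty → ∀ b, (b ∈ f a ↔ δ a ∈ Vset w b) := by
    intro a h b
    simp [hfdef, if_pos h]
  refine ⟨f, ?_, v, ?_, fun i => rfl, ?_⟩
  · -- property of f
    intro a
    by_cases h : (Vset w a).Nonempty
    · left
      refine ⟨(hfmem a h a).2 (hδmem a h), ?_⟩
      rintro (⟨a', R, hc, ha', hint⟩ | ⟨a', b', hc, ha', hb'⟩)
      · have hsub := hw _ hc
        have hda : δ a ∈ Vset w a' := (hfmem a h a').1 ha'
        have := hsub hda
        rw [Set.mem_iUnion₂] at this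
        obtain ⟨b, hbR, hb⟩ := this
        have hbf : b ∈ f a := (hfmem a h b).2 hb
        have : b ∈ f a ∩ R := Finset.mem_inter.2 ⟨hbf, hbR⟩
        rw [hint] at this
        exact Finset.notMem_empty _ this
      · have heq := hw _ hc
        have hda : δ a ∈ Vset w a' := (hfmem a h a').1 ha'
        have hdb : δ a ∈ Vset w b' := (hfmem a h b').1 hb'
        have : δ a ∈ Vset w a' ∩ Vset w b' := ⟨hda, hdb⟩
        rw [heq] at this
        exact this
    · right
      simp [hfdef, if_neg h]
  · -- v satisfies C
    intro c hc
    cases c with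
    | incl a R =>
      have hsub := hw _ hc
      intro x hx
      rw [hV] at hx
      obtain ⟨c, hx, hOc, hfix, hmem⟩ := hx
      have := hsub hmem
      rw [Set.mem_iUnion₂] at this
      obtain ⟨b, hbR, hb⟩ := this
      rw [Set.mem_iUnion₂]
      exact ⟨b, hbR, (hV b x).2 ⟨c, hx, hOc, hfix, hb⟩⟩
    | denial a b =>
      have heq := hw _ hc
      ext x
      simp only [Set.mem_inter_iff, Set.mem_empty_iff_false, iff_false, not_and]
      intro hxa hxb
      rw [hV] at hxa hxb
      obtain ⟨c, hx, hOc, hfix, hmem⟩ := hxa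
      obtain ⟨c', hx', hOc', hfix', hmem'⟩ := hxb
      have : c = c' := hecode (show ((e c : ℕ)) = ((e c' : ℕ)) from hx.symm.trans hx')
      subst this
      have : δ c ∈ Vset w a ∩ Vset w b := ⟨hmem, hmem'⟩
      rw [heq] at this
      exact this
  · -- empty classes
    intro S hS hne
    by_contra hc
    rw [Set.eq_empty_iff_forall_notMem] at hc
    push_neg at hc
    obtain ⟨x, hx1, hx2⟩ := hc
    obtain ⟨b₀, hb₀⟩ := hS
    have hxb₀ : x ∈ Vset v b₀ := by
      have := Set.mem_iInter₂.1 hx1 b₀ hb₀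
      exact this
    rw [hV] at hxb₀
    obtain ⟨c, hx, hOc, hfix, hmem⟩ := hxb₀
    apply hne c
    ext b
    rw [hfmem c hOc b]
    constructor
    · intro hb
      by_contra hbS
      have hbS' : b ∈ Sᶜ := Finset.mem_compl.2 hbS
      have := Set.mem_iInter₂.1 hx2 b hbS'
      exact this ((hV b x).2 ⟨c, hx, hOc, hfix, hb⟩)
    · intro hbS
      have hxb : x ∈ Vset v b := Set.mem_iInter₂.1 hx1 b hbS
      rw [hV] at hxb
      obtain ⟨c', hx', hOc', hfix', hmem'⟩ := hxb
      have : c = c' := hecode (show ((e c : ℕ)) = ((e c' : ℕ)) from hx.symm.trans hx')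
      subst this
      exact hmem'
end

section
/- For every Büchi automaton A over the alphabet Σ × {*,⊤,⊥} × {*,⊤,⊥} (Σ a finite alphabet) there exists a Büchi automaton B over the alphabet Σ ∪ 2^Σ such that for every data ω-word w having infinitely many zones (hence all zones finite): Profile(w) ∈ L(A) if and only if Proj(Zonal(w)) ∈ L(B). -/
/-!
Inside a zone the profile of a position is read off `Proj(Zonal(w))`: its left profile is `*`
for the first letter, `⊥` right after a marker `S ∈ 2^Σ` and `⊤` otherwise, and its right
profile is `⊥` exactly when a marker follows. So `B` runs `M` on the letters of the zonal word,
treating markers as silent steps, keeps the left profile of the next letter in a finite memory,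
and guesses whether a marker comes next, the guess being checked on the following symbol. A run
of `M` on `Profile(w)` and an accepting run of `B` on `Proj(Zonal(w))` then determine each other.
-/

/-- The profile components `*`, `⊤`, `⊥`. -/
inductive Tri : Type
  | star : Tri
  | top : Tri
  | bot : Tri

/-- A Büchi automaton over the alphabet `Γ`: a finite state set, an initial
state, a transition relation `μ ⊆ Q × Γ × Q` and an accepting set `F ⊆ Q`. -/
structure Buchi (Γ : Type*) where
  Q : Type
  fin : Fintype Q
  init : Q
  trans : Set (Q × Γ × Q)
  accept : Set Q

/-- Acceptance: some run on the ω-word `x` visits an accepting state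
infinitely often. -/
def Buchi.Accepts {Γ : Type*} (M : Buchi Γ) (x : ℕ → Γ) : Prop :=
  ∃ ρ : ℕ → M.Q,
    (M.init, x 0, ρ 0) ∈ M.trans ∧
    (∀ i, (ρ i, x (i + 1), ρ (i + 1)) ∈ M.trans) ∧
    ∃ q ∈ M.accept, ∀ N, ∃ i, N ≤ i ∧ ρ i = q

variable {A : Type*} [Fintype A] [DecidableEq A]

/-- The `i`-th letter of `Profile(w)`: the label of position `i` together with
its left profile (`*` at the first position, `⊤` if the previous data value is
equal, `⊥` otherwise) and its right profile (`⊤` if the next data value is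
equal, `⊥` otherwise). -/
def profileAt (w : ℕ → A × ℕ) (i : ℕ) : A × Tri × Tri :=
  ((w i).1,
    if i = 0 then Tri.star else if (w (i - 1)).2 = (w i).2 then Tri.top else Tri.bot,
    if (w i).2 = (w (i + 1)).2 then Tri.top else Tri.bot)

/-- `k` enumerates (in increasing order) the last positions of the zones of
`w`; its existence says exactly that `w` has infinitely many zones (hence all
zones are finite). -/
def IsZonalPartition (w : ℕ → A × ℕ) (k : ℕ → ℕ) : Prop :=
  StrictMono k ∧ ∀ i : ℕ, ((w i).2 ≠ (w (i + 1)).2 ↔ ∃ j, k j = i)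

/-- The first position of the `j`-th zone, given the enumeration `k` of the
last positions of the zones. -/
def zoneStartPos (k : ℕ → ℕ) : ℕ → ℕ
  | 0 => 0
  | j + 1 => k j + 1

/-- The set of labels occurring at positions `lo, …, hi` of `w`. -/
def segLabels (w : ℕ → A × ℕ) (lo hi : ℕ) : Finset A :=
  (Finset.Icc lo hi).image fun i => (w i).1

/-- `z` is the label sequence `Proj(Zonal(w))` of the zonal word of `w`
(w.r.t. the zonal partition `k`): each zone, preceded by the letter
`S ∈ 2^Σ` for which it is an `S`-zone, contributes its block of labels. -/
def IsZonalProj (w : ℕ → A × ℕ) (k : ℕ → ℕ) (z : ℕ → A ⊕ Finset A) : Prop :=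
  ∀ j : ℕ,
    z (zoneStartPos k j + j) = Sum.inr (segLabels w (zoneStartPos k j) (k j)) ∧
    ∀ i, zoneStartPos k j ≤ i → i ≤ k j → z (i + j + 1) = Sum.inl (w i).1

open Filter

theorem infinite_of_strictMono {f : ℕ → ℕ} {p : ℕ → Prop} (hf : StrictMono f)
    (hp : ∀ n, p n ↔ n ∈ Set.range f) : (Set.ofPred p).Infinite := by
  convert Set.infinite_range_of_injective hf.injective
  ext n
  exact hp n

theorem eq_nth_of_strictMono {f : ℕ → ℕ} {p : ℕ → Prop} (hf : StrictMono f)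
    (hp : ∀ n, p n ↔ n ∈ Set.range f) : f = Nat.nth p := by
  have hinf := infinite_of_strictMono hf hp
  have huniv : ∀ n, n ∈ {n : ℕ | ∀ hfin : (Set.ofPred p).Finite, n < hfin.toFinset.card} :=
    fun _ hfin => absurd hfin hinf
  funext n
  refine Nat.eq_nth_of_strictMonoOn_of_mapsTo_of_surjOn f (fun m hm => ?_)
    (fun m _ => (hp _).2 ⟨m, rfl⟩) (hf.strictMonoOn _) (huniv n)
  obtain ⟨i, rfl⟩ := (hp m).1 hm
  exact ⟨i, huniv i, rfl⟩

def foldPrefix {α Mem : Type*} (m₀ : Mem) (g : Mem → α → Mem) (z : ℕ → α) : ℕ → Mem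
  | 0 => m₀
  | n + 1 => g (foldPrefix m₀ g z n) (z n)

namespace Buchi

variable {Γ : Type*}

def IsRun (M : Buchi Γ) (x : ℕ → Γ) (ρ : ℕ → M.Q) : Prop :=
  ρ 0 = M.init ∧ ∀ n, (ρ n, x n, ρ (n + 1)) ∈ M.trans

theorem accepts_iff_exists_isRun {M : Buchi Γ} {x : ℕ → Γ} :
    M.Accepts x ↔ ∃ ρ, M.IsRun x ρ ∧ ∃ᶠ n in atTop, ρ n ∈ M.accept := by
  constructor
  · rintro ⟨ρ, h0, hstep, q, hq, hinf⟩
    refine ⟨fun n => Nat.casesOn n M.init ρ, ⟨rfl, ?_⟩, frequently_atTop.2 fun N => ?_⟩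
    · rintro (_ | n)
      exacts [h0, hstep n]
    · obtain ⟨i, hi, rfl⟩ := hinf N
      exact ⟨i + 1, by omega, hq⟩
  · rintro ⟨ρ, ⟨h0, hstep⟩, hacc⟩
    have := M.fin
    -- pigeonhole: `M.Q` is finite, so a single accepting state recurs
    obtain ⟨q, hq⟩ := frequently_exists.1
      (hacc.mono fun n hn => (⟨⟨ρ n, hn⟩, rfl⟩ : ∃ q : M.accept, ρ n = q))
    refine ⟨fun n => ρ (n + 1), h0 ▸ hstep 0, fun n => hstep (n + 1), q, q.2, fun N => ?_⟩
    obtain ⟨n, hn, hρ⟩ := frequently_atTop.1 hq (N + 1)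
    exact ⟨n - 1, by omega, by simpa only [Nat.sub_add_cancel (by omega : 1 ≤ n)]⟩

abbrev stutter (M : Buchi Γ) : Buchi (Option Γ) where
  Q := M.Q
  fin := M.fin
  init := M.init
  trans := {t | t.2.1.elim (t.2.2 = t.1) fun a => (t.1, a, t.2.2) ∈ M.trans}
  accept := M.accept

@[simp]
theorem mem_stutter_trans_none {M : Buchi Γ} {q q' : M.stutter.Q} :
    ((q, none, q') ∈ M.stutter.trans) ↔ q' = q := Iff.rfl

@[simp]
theorem mem_stutter_trans_some {M : Buchi Γ} {q q' : M.stutter.Q} {a : Γ} :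
    ((q, some a, q') ∈ M.stutter.trans) ↔ (q, a, q') ∈ M.trans := Iff.rfl

theorem stutter_run_eq_of_forall_none {M : Buchi Γ} {y : ℕ → Option Γ} {σ : ℕ → M.Q}
    (hσ : ∀ n, (σ n, y n, σ (n + 1)) ∈ M.stutter.trans) {a b : ℕ} (hab : a ≤ b)
    (hnone : ∀ m, a ≤ m → m < b → y m = none) : σ a = σ b := by
  induction b, hab using Nat.le_induction with
  | base => rfl
  | succ b hab ih =>
    have hb := hσ b
    rw [hnone b hab (Nat.lt_succ_self b), mem_stutter_trans_none] at hb
    rw [hb, ih fun m h1 h2 => hnone m h1 (Nat.lt_succ_of_lt h2)]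

/-- `Nat.nth p (Nat.count p n)` is the first letter position at or after `n`. -/
theorem stutter_run_eq_nth_count {M : Buchi Γ} {y : ℕ → Option Γ} {σ : ℕ → M.Q}
    (hσ : ∀ n, (σ n, y n, σ (n + 1)) ∈ M.stutter.trans)
    (hinf : (Set.ofPred fun n => (y n).isSome).Infinite) (n : ℕ) :
    σ n = σ (Nat.nth (fun n => (y n).isSome) (Nat.count (fun n => (y n).isSome) n)) := by
  refine stutter_run_eq_of_forall_none hσ (Nat.le_nth_count hinf n) fun m hnm hm => ?_
  by_contra hym
  rw [Nat.nth_count_eq_sInf] at hm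
  exact (Nat.sInf_le (show m ∈ {i | (y i).isSome ∧ n ≤ i} from
    ⟨Option.ne_none_iff_isSome.1 hym, hnm⟩)).not_gt hm

theorem stutter_accepts_iff {M : Buchi Γ} {x : ℕ → Γ} {y : ℕ → Option Γ} {φ : ℕ → ℕ}
    (hφ : StrictMono φ) (hx : ∀ i, y (φ i) = some (x i))
    (hnone : ∀ n, n ∉ Set.range φ → y n = none) :
    M.stutter.Accepts y ↔ M.Accepts x := by
  set p : ℕ → Prop := fun n => (y n).isSome
  have hp : ∀ n, p n ↔ n ∈ Set.range φ := fun n => by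
    refine ⟨fun h => by_contra fun hn => ?_, ?_⟩
    · simp [p, hnone n hn] at h
    · rintro ⟨i, rfl⟩
      simp [p, hx]
  have hinf := infinite_of_strictMono hφ hp
  have hnth : φ = Nat.nth p := eq_nth_of_strictMono hφ hp
  have hcount : ∀ i, Nat.count p (φ i) = i := by
    rw [hnth]; exact Nat.count_nth_of_infinite hinf
  rw [accepts_iff_exists_isRun, accepts_iff_exists_isRun]
  constructor
  · rintro ⟨σ, ⟨h0, hstep⟩, hacc⟩
    have hnext : ∀ n, σ n = σ (φ (Nat.count p n)) :=
      hnth ▸ stutter_run_eq_nth_count hstep hinf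
    refine ⟨fun i => σ (φ i), ⟨?_, fun i => ?_⟩, ?_⟩
    · calc σ (φ 0) = σ 0 := by rw [hnext 0, Nat.count_zero]
        _ = M.init := h0
    · have hi := hstep (φ i)
      rwa [hx, mem_stutter_trans_some, hnext (φ i + 1), Nat.count_succ, hcount,
        if_pos ((hp _).2 ⟨i, rfl⟩)] at hi
    · refine (tendsto_atTop_atTop_of_monotone (Nat.count_monotone p)
        fun i => ⟨φ i, (hcount i).ge⟩).frequently (hacc.mono fun n hn => ?_)
      rwa [hnext n] at hn
  · rintro ⟨ρ, ⟨h0, hstep⟩, hacc⟩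
    refine ⟨fun n => ρ (Nat.count p n), ⟨by simpa using h0, fun n => ?_⟩, ?_⟩
    · by_cases hn : n ∈ Set.range φ
      · obtain ⟨i, rfl⟩ := hn
        dsimp only
        rw [hx, mem_stutter_trans_some, Nat.count_succ, hcount, if_pos ((hp _).2 ⟨i, rfl⟩)]
        exact hstep i
      · dsimp only
        rw [hnone n hn, mem_stutter_trans_none, Nat.count_succ, if_neg (mt (hp n).1 hn),
          Nat.add_zero]
    · exact hφ.tendsto_atTop.frequently (hacc.mono fun i hi => by dsimp only; rwa [hcount])

section Lookahead

variable {α : Type*} {Mem R : Type} [Fintype Mem] [Fintype R]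

/-- In a state `(q, m, o)`, `q` is the state of `N`, `m` the memory of the symbols read so far
and `o` the class guessed for the next symbol (`none` before the first one). -/
def lookahead (N : Buchi Γ) (m₀ : Mem) (g : Mem → α → Mem) (cls : α → R)
    (f : Mem → α → R → Γ) : Buchi α where
  Q := N.Q × Mem × Option R
  fin := by have := N.fin; infer_instance
  init := (N.init, m₀, none)
  trans := {t | (∀ r ∈ t.1.2.2, r = cls t.2.1) ∧ t.2.2.2.1 = g t.1.2.1 t.2.1 ∧
    ∃ r, t.2.2.2.2 = some r ∧ (t.1.1, f t.1.2.1 t.2.1 r, t.2.2.1) ∈ N.trans}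
  accept := {s | s.1 ∈ N.accept}

theorem lookahead_accepts_iff {N : Buchi Γ} {m₀ : Mem} {g : Mem → α → Mem} {cls : α → R}
    {f : Mem → α → R → Γ} {z : ℕ → α} :
    (N.lookahead m₀ g cls f).Accepts z ↔
      N.Accepts fun n => f (foldPrefix m₀ g z n) (z n) (cls (z (n + 1))) := by
  rw [accepts_iff_exists_isRun, accepts_iff_exists_isRun]
  constructor
  · rintro ⟨σ, ⟨h0, hstep⟩, hacc⟩
    have hmem : ∀ n, (σ n).2.1 = foldPrefix m₀ g z n := fun n => by
      induction n with
      | zero => rw [h0]; rfl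
      | succ n ih => rw [(hstep n).2.1, ih]; rfl
    refine ⟨fun n => (σ n).1, ⟨congrArg Prod.fst h0, fun n => ?_⟩, hacc⟩
    obtain ⟨r, hr, htr⟩ := (hstep n).2.2
    -- the guess made at step `n` is checked at step `n + 1`
    rwa [hmem, (hstep (n + 1)).1 r hr] at htr
  · rintro ⟨ρ, ⟨h0, hstep⟩, hacc⟩
    refine ⟨fun n => (ρ n, foldPrefix m₀ g z n, if n = 0 then none else some (cls (z n))),
      ⟨Prod.ext h0 rfl, fun n => ⟨?_, rfl, cls (z (n + 1)), by simp, hstep n⟩⟩,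
      hacc⟩
    dsimp only
    split_ifs <;> simp

end Lookahead

end Buchi

section Zones

variable {α : Type*}

def IsZoneEnd (w : ℕ → α × ℕ) (i : ℕ) : Prop := (w i).2 ≠ (w (i + 1)).2

instance (w : ℕ → α × ℕ) : DecidablePred (IsZoneEnd w) :=
  fun _ => inferInstanceAs (Decidable (_ ≠ _))

/-- `Nat.count (IsZoneEnd w) i` is the index of the zone of `i`, so in `Proj(Zonal(w))` the
letter of position `i` is preceded by `i` letters and by that many markers plus one. -/
def letterPos (w : ℕ → α × ℕ) (i : ℕ) : ℕ := i + Nat.count (IsZoneEnd w) i + 1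

def zoneMarkerPos (k : ℕ → ℕ) (j : ℕ) : ℕ := zoneStartPos k j + j

variable {w : ℕ → α × ℕ}

theorem letterPos_zero : letterPos w 0 = 1 := rfl

theorem letterPos_succ (i : ℕ) :
    letterPos w (i + 1) = letterPos w i + 1 + if IsZoneEnd w i then 1 else 0 := by
  simp only [letterPos, Nat.count_succ]
  omega

theorem letterPos_strictMono : StrictMono (letterPos w) :=
  strictMono_nat_of_lt_succ fun i => by rw [letterPos_succ]; omega

theorem eq_zero_or_exists_letterPos (n : ℕ) :
    n = 0 ∨ n ∈ Set.range (letterPos w) ∨ ∃ i, IsZoneEnd w i ∧ n = letterPos w i + 1 := by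
  induction n with
  | zero => exact Or.inl rfl
  | succ n ih =>
    right
    rcases ih with rfl | ⟨i, rfl⟩ | ⟨i, hi, rfl⟩
    · exact Or.inl ⟨0, letterPos_zero⟩
    · by_cases hi : IsZoneEnd w i
      · exact Or.inr ⟨i, hi, rfl⟩
      · exact Or.inl ⟨i + 1, by rw [letterPos_succ, if_neg hi]⟩
    · exact Or.inl ⟨i + 1, by rw [letterPos_succ, if_pos hi]⟩

variable {k : ℕ → ℕ}

theorem zoneStartPos_le (hk : StrictMono k) (j : ℕ) : zoneStartPos k j ≤ k j := by
  cases j with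
  | zero => exact Nat.zero_le _
  | succ j => exact hk j.lt_succ_self

theorem zoneMarkerPos_strictMono (hk : StrictMono k) : StrictMono (zoneMarkerPos k) :=
  (strictMono_nat_of_lt_succ (f := zoneStartPos k) fun j =>
    Nat.lt_succ_of_le (zoneStartPos_le hk j)).add strictMono_id

namespace IsZonalPartition

theorem eq_nth (h : IsZonalPartition w k) : k = Nat.nth (IsZoneEnd w) :=
  eq_nth_of_strictMono h.1 h.2

theorem infinite_zoneEnd (h : IsZonalPartition w k) : (Set.ofPred (IsZoneEnd w)).Infinite :=
  infinite_of_strictMono h.1 h.2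

theorem zoneStartPos_count_le (h : IsZonalPartition w k) (i : ℕ) :
    zoneStartPos k (Nat.count (IsZoneEnd w) i) ≤ i := by
  rcases hc : Nat.count (IsZoneEnd w) i with _ | j
  · exact Nat.zero_le _
  · rw [h.eq_nth]
    exact Nat.nth_lt_of_lt_count (hc ▸ j.lt_succ_self)

theorem le_count (h : IsZonalPartition w k) (i : ℕ) : i ≤ k (Nat.count (IsZoneEnd w) i) :=
  h.eq_nth ▸ Nat.le_nth_count h.infinite_zoneEnd i

theorem count_eq_of_mem_zone (h : IsZonalPartition w k) {i j : ℕ}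
    (h1 : zoneStartPos k j ≤ i) (h2 : i ≤ k j) : Nat.count (IsZoneEnd w) i = j := by
  rw [h.eq_nth] at h1 h2
  refine le_antisymm ((Nat.count_le_iff_le_nth h.infinite_zoneEnd).2 h2) ?_
  rcases j with _ | j
  · exact Nat.zero_le _
  · exact (Nat.lt_nth_iff_count_lt h.infinite_zoneEnd).2 h1

theorem zoneMarkerPos_ne_letterPos (h : IsZonalPartition w k) (i j : ℕ) :
    zoneMarkerPos k j ≠ letterPos w i := by
  have hlo : zoneMarkerPos k (Nat.count (IsZoneEnd w) i) < letterPos w i := by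
    have := h.zoneStartPos_count_le i
    simp only [zoneMarkerPos, letterPos]
    omega
  have hhi : letterPos w i < zoneMarkerPos k (Nat.count (IsZoneEnd w) i + 1) := by
    have := h.le_count i
    simp only [zoneMarkerPos, letterPos, zoneStartPos]
    omega
  have hmono := zoneMarkerPos_strictMono h.1
  rcases le_or_gt j (Nat.count (IsZoneEnd w) i) with hj | hj
  · exact ((hmono.monotone hj).trans_lt hlo).ne
  · exact (hhi.trans_le (hmono.monotone hj)).ne'

theorem exists_isZonalProj [DecidableEq α] (h : IsZonalPartition w k) :
    ∃ z, IsZonalProj w k z := by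
  classical
  let zone (n : ℕ) : ℕ := Function.invFun (zoneMarkerPos k) n
  refine ⟨fun n => if n ∈ Set.range (letterPos w)
      then Sum.inl (w (Function.invFun (letterPos w) n)).1
      else Sum.inr (segLabels w (zoneStartPos k (zone n)) (k (zone n))),
    fun j => ⟨?_, fun i h1 h2 => ?_⟩⟩
  · have hj : zone (zoneMarkerPos k j) = j :=
      Function.leftInverse_invFun (zoneMarkerPos_strictMono h.1).injective j
    dsimp only
    rw [show zoneStartPos k j + j = zoneMarkerPos k j from rfl, hj, if_neg]
    rintro ⟨i, hi⟩
    exact h.zoneMarkerPos_ne_letterPos i j hi.symm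
  · have hpos : i + j + 1 = letterPos w i := by rw [letterPos, h.count_eq_of_mem_zone h1 h2]
    dsimp only
    rw [hpos, if_pos (Set.mem_range_self i),
      Function.leftInverse_invFun letterPos_strictMono.injective i]

end IsZonalPartition

end Zones

instance : Fintype Tri where
  elems := ⟨[Tri.star, Tri.top, Tri.bot], by simp⟩
  complete x := by cases x <;> simp

section ZonalAutomaton

variable {α β : Type*}

/-- The left profile of a letter following the symbol `s`, given the left profile `l` that a
letter in place of `s` would have had. -/
def profileScan : (l : Tri) → (s : α ⊕ β) → Tri
  | _, .inl _ => .top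
  | .star, .inr _ => .star
  | _, .inr _ => .bot

def profileLetter : Tri → α ⊕ β → Bool → Option (α × Tri × Tri)
  | l, .inl a, nextIsMarker => some (a, l, bif nextIsMarker then .bot else .top)
  | _, .inr _, _ => none

def zonalAutomaton (M : Buchi (α × Tri × Tri)) : Buchi (α ⊕ Finset α) :=
  M.stutter.lookahead Tri.star profileScan Sum.isRight profileLetter

end ZonalAutomaton

namespace IsZonalProj

variable {α : Type*} [DecidableEq α] {w : ℕ → α × ℕ} {k : ℕ → ℕ} {z : ℕ → α ⊕ Finset α}

theorem apply_letterPos (hk : IsZonalPartition w k) (hz : IsZonalProj w k z) (i : ℕ) :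
    z (letterPos w i) = Sum.inl (w i).1 :=
  (hz _).2 i (hk.zoneStartPos_count_le i) (hk.le_count i)

theorem isRight_zero (hz : IsZonalProj w k z) : (z 0).isRight := by
  rw [show z 0 = _ from (hz 0).1]
  rfl

theorem isRight_letterPos_add_one_iff (hk : IsZonalPartition w k) (hz : IsZonalProj w k z)
    (i : ℕ) : (z (letterPos w i + 1)).isRight ↔ IsZoneEnd w i := by
  by_cases hi : IsZoneEnd w i
  · have hki : k (Nat.count (IsZoneEnd w) i) = i := by rw [hk.eq_nth]; exact Nat.nth_count hi
    have hmarker := (hz (Nat.count (IsZoneEnd w) i + 1)).1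
    rw [zoneStartPos, hki, show i + 1 + (Nat.count (IsZoneEnd w) i + 1) = letterPos w i + 1 by
      rw [letterPos]; ring] at hmarker
    simp [hmarker, hi]
  · rw [show letterPos w i + 1 = letterPos w (i + 1) by rw [letterPos_succ, if_neg hi],
      hz.apply_letterPos hk]
    simp [hi]

theorem isRight_of_notMem_range (hk : IsZonalPartition w k) (hz : IsZonalProj w k z) {n : ℕ}
    (hn : n ∉ Set.range (letterPos w)) : (z n).isRight := by
  rcases eq_zero_or_exists_letterPos (w := w) n with rfl | hn' | ⟨i, hi, rfl⟩
  · exact hz.isRight_zero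
  · exact absurd hn' hn
  · exact (hz.isRight_letterPos_add_one_iff hk i).2 hi

theorem foldPrefix_letterPos (hk : IsZonalPartition w k) (hz : IsZonalProj w k z) :
    ∀ i, foldPrefix .star profileScan z (letterPos w i) = (profileAt w i).2.1
  | 0 => by
    obtain ⟨S, hS⟩ := Sum.isRight_iff.1 hz.isRight_zero
    rw [letterPos_zero, foldPrefix, foldPrefix, hS]
    simp [profileScan, profileAt]
  | i + 1 => by
    by_cases hi : IsZoneEnd w i
    · obtain ⟨S, hS⟩ := Sum.isRight_iff.1 ((hz.isRight_letterPos_add_one_iff hk i).2 hi)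
      rw [letterPos_succ, if_pos hi, foldPrefix, foldPrefix, hS, hz.apply_letterPos hk]
      simpa [profileScan, profileAt, IsZoneEnd] using hi
    · rw [letterPos_succ, if_neg hi, Nat.add_zero, foldPrefix, hz.apply_letterPos hk]
      simpa [profileScan, profileAt, IsZoneEnd] using hi

theorem profileLetter_letterPos (hk : IsZonalPartition w k) (hz : IsZonalProj w k z) (i : ℕ) :
    profileLetter (foldPrefix .star profileScan z (letterPos w i)) (z (letterPos w i))
      (z (letterPos w i + 1)).isRight = some (profileAt w i) := by
  rw [hz.apply_letterPos hk, hz.foldPrefix_letterPos hk]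
  by_cases hi : IsZoneEnd w i
  · simpa [profileLetter, profileAt, (hz.isRight_letterPos_add_one_iff hk i).2 hi, IsZoneEnd]
      using hi
  · simpa [profileLetter, profileAt, mt (hz.isRight_letterPos_add_one_iff hk i).1 hi, IsZoneEnd]
      using hi

theorem profileLetter_of_notMem_range (hk : IsZonalPartition w k) (hz : IsZonalProj w k z)
    {n : ℕ} (hn : n ∉ Set.range (letterPos w)) :
    profileLetter (foldPrefix .star profileScan z n) (z n) (z (n + 1)).isRight = none := by
  obtain ⟨S, hS⟩ := Sum.isRight_iff.1 (hz.isRight_of_notMem_range hk hn)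
  rw [hS, profileLetter]

end IsZonalProj

/-- **Zonal automata**: for every Büchi automaton `M` over
`Σ × {*,⊤,⊥} × {*,⊤,⊥}` there is a Büchi automaton `B` over `Σ ∪ 2^Σ` such
that for every data ω-word `w` with infinitely many zones:
`Profile(w) ∈ L(M)` iff `Proj(Zonal(w)) ∈ L(B)`. -/
theorem exists_zonal_automaton (M : Buchi (A × Tri × Tri)) :
    ∃ B : Buchi (A ⊕ Finset A),
      ∀ (w : ℕ → A × ℕ) (k : ℕ → ℕ), IsZonalPartition w k →
        (∃ z, IsZonalProj w k z) ∧
        ∀ z : ℕ → A ⊕ Finset A, IsZonalProj w k z →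
          (M.Accepts (fun i => profileAt w i) ↔ B.Accepts z) := by
  refine ⟨zonalAutomaton M, fun w k hk => ⟨hk.exists_isZonalProj, fun z hz => ?_⟩⟩
  rw [zonalAutomaton, Buchi.lookahead_accepts_iff]
  exact (Buchi.stutter_accepts_iff letterPos_strictMono (hz.profileLetter_letterPos hk)
    fun _ hn => hz.profileLetter_of_notMem_range hk hn).symm
end
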